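/- Let M ∈ ℝ^{l×n}, d, y ∈ ℝ^l, β > 0, and let 𝒞 = [0,1]^l ⊂ ℝ^l. Let Π_𝒞 : ℝ^l → ℝ^l be the componentwise projection (Π_𝒞(v))_i = min{max{v_i, 0}, 1}. Define g : ℝ^n → ℝ by g(x) = min_{w ∈ 𝒞} ( −⟨w, Mx + d⟩ + (1/(2β))‖w − y‖² ). Then g is differentiable at every x ∈ ℝ^n with gradient ∇g(x) = −M^⊤ Π_𝒞( y + β(Mx + d) ). -/

import Mathlib

/-!
The objective is separable in the coordinates of `w`. Writing `a = Mx + d` and completing the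
square, the `i`-th term is `(t - u)² / (2β) - yᵢ aᵢ - β aᵢ² / 2` with `u = yᵢ + β aᵢ`, so it is
minimised over `t ∈ [0,1]` at the clamp of `u`, and the minimum value involves
`dist(u, [0,1])² = max(-u, 0)² + max(u - 1, 0)²`. That function is differentiable with derivative
`2 (u - clamp u)`, so the derivative of the `i`-th minimum in `aᵢ` is `-clamp(yᵢ + β aᵢ)`, and the
chain rule through `x ↦ Mx + d` produces `-Mᵀ clamp(y + β (Mx + d))`.
-/

open Matrix Set Filter Topology

theorem isLeast_image_univ_pi_sum {ι M : Type*} {α : ι → Type*} [Fintype ι]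
    [AddCommMonoid M] [PartialOrder M] [IsOrderedAddMonoid M]
    {f : ∀ i, α i → M} {s : ∀ i, Set (α i)} {m : ι → M} (h : ∀ i, IsLeast (f i '' s i) (m i)) :
    IsLeast ((fun w => ∑ i, f i (w i)) '' univ.pi s) (∑ i, m i) := by
  choose w hws hwm using fun i => (h i).1
  refine ⟨⟨w, mem_univ_pi.2 hws, by simp only [hwm]⟩, ?_⟩
  rintro _ ⟨v, hv, rfl⟩
  exact Finset.sum_le_sum fun i _ => (h i).2 ⟨v i, mem_univ_pi.1 hv i, rfl⟩

theorem hasGradientAt_sum_comp_mulVec_add {ι κ : Type*} [Fintype ι] [Fintype κ]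
    (M : Matrix κ ι ℝ) (d : κ → ℝ) {φ : κ → ℝ → ℝ} {φ' : κ → ℝ} {x : EuclideanSpace ℝ ι}
    (hφ : ∀ i, HasDerivAt (φ i) (φ' i) ((M *ᵥ x.ofLp + d) i)) :
    HasGradientAt (fun z : EuclideanSpace ℝ ι => ∑ i, φ i ((M *ᵥ z.ofLp + d) i))
      (WithLp.toLp 2 (Mᵀ *ᵥ φ')) x := by
  let A : EuclideanSpace ℝ ι →L[ℝ] κ → ℝ :=
    M.mulVecLin.toContinuousLinearMap ∘L (PiLp.continuousLinearEquiv 2 ℝ fun _ : ι => ℝ)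
  have hA : HasFDerivAt (fun z : EuclideanSpace ℝ ι => M *ᵥ z.ofLp + d) A x :=
    A.hasFDerivAt.add_const d
  have hsum : HasFDerivAt (fun a : κ → ℝ => ∑ i, φ i (a i))
      (∑ i, φ' i • ContinuousLinearMap.proj i) (M *ᵥ x.ofLp + d) :=
    HasFDerivAt.fun_sum fun i _ =>
      (hφ i).comp_hasFDerivAt (f := fun a : κ → ℝ => a i) _ (hasFDerivAt_apply (𝕜 := ℝ) i _)
  rw [hasGradientAt_iff_hasFDerivAt]
  refine (hsum.comp x hA).congr_fderiv (ContinuousLinearMap.ext fun v => ?_)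
  simp only [A, ContinuousLinearMap.comp_apply, ContinuousLinearEquiv.coe_coe,
    LinearMap.coe_toContinuousLinearMap', mulVecLin_apply, _root_.sum_apply,
    _root_.smul_apply, ContinuousLinearMap.proj_apply, smul_eq_mul,
    InnerProductSpace.toDual_apply_apply, EuclideanSpace.inner_eq_star_dotProduct, star_trivial,
    mulVec_transpose, dotProduct_comm v.ofLp, ← dotProduct_mulVec]
  rfl

noncomputable def clampUnit (u : ℝ) : ℝ := min (max u 0) 1

lemma clampUnit_mem_Icc (u : ℝ) : clampUnit u ∈ Icc (0 : ℝ) 1 :=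
  ⟨le_min (le_max_right _ _) zero_le_one, min_le_right _ _⟩

lemma clampUnit_sub_self (u : ℝ) : clampUnit u - u = max (-u) 0 - max (u - 1) 0 := by
  unfold clampUnit
  rcases le_total u 0 with h | h
  · rw [max_eq_right h, min_eq_left zero_le_one, max_eq_left (by linarith),
      max_eq_right (by linarith)]
    ring
  rcases le_total u 1 with h' | h'
  · rw [max_eq_left h, min_eq_left h', max_eq_right (by linarith), max_eq_right (by linarith)]
    ring
  · rw [max_eq_left h, min_eq_right h', max_eq_right (by linarith), max_eq_left (by linarith)]
    ring

lemma sq_clampUnit_sub_le {t : ℝ} (ht : t ∈ Icc (0 : ℝ) 1) (u : ℝ) :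
    (clampUnit u - u) ^ 2 ≤ (t - u) ^ 2 := by
  obtain ⟨h0, h1⟩ := ht
  rw [clampUnit_sub_self]
  rcases le_total u 0 with h | h
  · rw [max_eq_left (by linarith), max_eq_right (by linarith)]
    nlinarith
  rcases le_total u 1 with h' | h'
  · rw [max_eq_right (by linarith), max_eq_right (by linarith)]
    nlinarith [sq_nonneg (t - u)]
  · rw [max_eq_right (by linarith), max_eq_left (by linarith)]
    nlinarith

lemma hasDerivAt_max_zero_sq (t : ℝ) :
    HasDerivAt (fun s : ℝ => max s 0 ^ 2) (2 * max t 0) t := by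
  refine hasDerivAt_of_hasDerivAt_of_ne' (f := fun s : ℝ => max s 0 ^ 2)
    (g := fun s => 2 * max s 0) (x := 0) (fun s hs => ?_) (by fun_prop) (by fun_prop) t
  rcases hs.lt_or_gt with hs | hs
  · have hloc : (fun r : ℝ => max r 0 ^ 2) =ᶠ[𝓝 s] fun _ => 0 := by
      filter_upwards [eventually_lt_nhds hs] with r hr
      simp [hr.le]
    simpa [hs.le] using (hasDerivAt_const s (0 : ℝ)).congr_of_eventuallyEq hloc
  · have hloc : (fun r : ℝ => max r 0 ^ 2) =ᶠ[𝓝 s] fun r => r ^ 2 := by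
      filter_upwards [eventually_gt_nhds hs] with r hr
      simp [hr.le]
    simpa [hs.le] using (hasDerivAt_pow 2 s).congr_of_eventuallyEq hloc

lemma hasDerivAt_clampUnit_sub_sq (u : ℝ) :
    HasDerivAt (fun s => (clampUnit s - s) ^ 2) (2 * (u - clampUnit u)) u := by
  have hsplit : ∀ s, (clampUnit s - s) ^ 2 = max (-s) 0 ^ 2 + max (s - 1) 0 ^ 2 := by
    intro s
    have hdisj : max (-s) 0 * max (s - 1) 0 = 0 := by
      rcases le_total s 0 with h | h
      · rw [max_eq_right (by linarith : s - 1 ≤ 0), mul_zero]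
      · rw [max_eq_right (by linarith : -s ≤ 0), zero_mul]
    rw [clampUnit_sub_self]
    linear_combination (-2) * hdisj
  have hneg := (hasDerivAt_max_zero_sq (-u)).comp u (hasDerivAt_neg u)
  have hsub := (hasDerivAt_max_zero_sq (u - 1)).comp u ((hasDerivAt_id u).sub_const 1)
  simp_rw [hsplit]
  refine (hneg.add hsub).congr_deriv ?_
  linear_combination 2 * clampUnit_sub_self u

section BoxMin

variable {β : ℝ}

lemma neg_mul_add_sq_eq (hβ : β ≠ 0) (a c t : ℝ) :
    -(t * a) + 1 / (2 * β) * (t - c) ^ 2 =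
      1 / (2 * β) * (t - (c + β * a)) ^ 2 - c * a - β * a ^ 2 / 2 := by
  field_simp
  ring

noncomputable def boxMin (β c a : ℝ) : ℝ :=
  1 / (2 * β) * (clampUnit (c + β * a) - (c + β * a)) ^ 2 - c * a - β * a ^ 2 / 2

lemma isLeast_boxMin (hβ : 0 < β) (c a : ℝ) :
    IsLeast ((fun t => -(t * a) + 1 / (2 * β) * (t - c) ^ 2) '' Icc 0 1) (boxMin β c a) := by
  have hmono : Monotone fun r : ℝ => 1 / (2 * β) * r - c * a - β * a ^ 2 / 2 :=
    fun r s hrs => by dsimp only; gcongr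
  have hsq : IsLeast ((fun t => (t - (c + β * a)) ^ 2) '' Icc 0 1)
      ((clampUnit (c + β * a) - (c + β * a)) ^ 2) :=
    ⟨mem_image_of_mem _ (clampUnit_mem_Icc _), by
      rintro _ ⟨t, ht, rfl⟩; exact sq_clampUnit_sub_le ht _⟩
  simp_rw [neg_mul_add_sq_eq hβ.ne']
  simpa [image_image, boxMin] using hmono.map_isLeast hsq

lemma hasDerivAt_boxMin (hβ : β ≠ 0) (c a : ℝ) :
    HasDerivAt (boxMin β c) (-clampUnit (c + β * a)) a := by
  have hu : HasDerivAt (fun s => c + β * s) β a := by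
    simpa using ((hasDerivAt_id a).const_mul β).const_add c
  have h := ((((hasDerivAt_clampUnit_sub_sq _).comp a hu).const_mul (1 / (2 * β))).sub
    ((hasDerivAt_id a).const_mul c)).sub (((hasDerivAt_pow 2 a).const_mul β).div_const 2)
  refine h.congr_deriv ?_
  field_simp
  ring

end BoxMin

lemma sInf_box_objective_eq {κ : Type*} [Fintype κ] {β : ℝ} (hβ : 0 < β) (a c : κ → ℝ) :
    sInf ((fun w : κ → ℝ => -(∑ i, w i * a i) + 1 / (2 * β) * ∑ i, (w i - c i) ^ 2) ''
      {w | ∀ i, w i ∈ Icc (0 : ℝ) 1}) = ∑ i, boxMin β (c i) (a i) := by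
  have hobj : (fun w : κ → ℝ => -(∑ i, w i * a i) + 1 / (2 * β) * ∑ i, (w i - c i) ^ 2) =
      fun w => ∑ i, (-(w i * a i) + 1 / (2 * β) * (w i - c i) ^ 2) := by
    funext w
    rw [Finset.sum_add_distrib, Finset.sum_neg_distrib, Finset.mul_sum]
  have hbox : {w : κ → ℝ | ∀ i, w i ∈ Icc (0 : ℝ) 1} = univ.pi fun _ => Icc 0 1 :=
    ext fun _ => mem_univ_pi.symm
  rw [hobj, hbox]
  exact (isLeast_image_univ_pi_sum fun i => isLeast_boxMin hβ (c i) (a i)).csInf_eq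

/-- Gradient of `g(x) = min_{w ∈ [0,1]^l} ( -⟨w, Mx + d⟩ + (1/(2β))‖w - y‖² )`:
`∇g(x) = -Mᵀ Π_𝒞(y + β(Mx + d))`, where `Π_𝒞` clamps componentwise to `[0,1]`. -/
theorem gradient_of_box_partial_min (l n : ℕ) (M : Matrix (Fin l) (Fin n) ℝ)
    (d y : Fin l → ℝ) (β : ℝ) (hβ : 0 < β) (x : EuclideanSpace ℝ (Fin n)) :
    HasGradientAt
      (fun z : EuclideanSpace ℝ (Fin n) =>
        sInf ((fun w : Fin l → ℝ =>
            -(∑ i, w i * (M.mulVec (fun j => z j) i + d i)) +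
              (1 / (2 * β)) * ∑ i, (w i - y i) ^ 2) ''
          {w : Fin l → ℝ | ∀ i, w i ∈ Set.Icc (0 : ℝ) 1}))
      ((WithLp.equiv 2 (Fin n → ℝ)).symm
        (-(Mᵀ.mulVec (fun i =>
            min (max (y i + β * (M.mulVec (fun j => x j) i + d i)) 0) 1))))
      x := by
  simp_rw [sInf_box_objective_eq hβ, ← mulVec_neg]
  exact hasGradientAt_sum_comp_mulVec_add M d fun i => hasDerivAt_boxMin hβ.ne' (y i) _
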